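/- arXiv:1810.08736 — 4 statements merged into one kernel-verified Lean document; each statement's English description precedes it below -/
import Mathlib

section
/- Let A be a complete Noetherian local commutative ring with maximal ideal m, and let M be a finitely generated A-module. For each n ≥ 1 set M_n = M/m^n M, and let G_n denote the group of A-module automorphisms of M_n; every A-module automorphism of M_{n+1} preserves the submodule m^n M_{n+1} and hence induces an A-module automorphism of M_n, giving transition group homomorphisms G_{n+1} → G_n. Then the inverse system (G_n)_{n ≥ 1} satisfies the Mittag-Leffler condition: for every n ≥ 1 there exists N ≥ n such that for all i, j ≥ N the image of G_i in G_n (under the composite transition maps) coincides with the image of G_j in G_n. -/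
/-- The natural projection `M/m^i M → M/m^n M` for `n ≤ i`. -/
noncomputable def quotProj {A : Type*} [CommRing A] (I : Ideal A)
    (M : Type*) [AddCommGroup M] [Module A M] {n i : ℕ} (h : n ≤ i) :
    (M ⧸ (I ^ i • ⊤ : Submodule A M)) →ₗ[A] (M ⧸ (I ^ n • ⊤ : Submodule A M)) :=
  Submodule.mapQ _ _ LinearMap.id (by
    rw [Submodule.comap_id]
    exact Submodule.smul_mono_left (Ideal.pow_le_pow_right h))

/-- The image of `G_i = Aut_A(M/m^i M)` in `G_n = Aut_A(M/m^n M)` under the composite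
transition maps: an automorphism `φ` of `M/m^n M` lies in this image iff it is induced by
some automorphism `ψ` of `M/m^i M`, i.e. `φ ∘ proj = proj ∘ ψ`. -/
def autImage {A : Type*} [CommRing A] (I : Ideal A)
    (M : Type*) [AddCommGroup M] [Module A M] {n i : ℕ} (h : n ≤ i) :
    Set ((M ⧸ (I ^ n • ⊤ : Submodule A M)) ≃ₗ[A] (M ⧸ (I ^ n • ⊤ : Submodule A M))) :=
  {φ | ∃ ψ : (M ⧸ (I ^ i • ⊤ : Submodule A M)) ≃ₗ[A] (M ⧸ (I ^ i • ⊤ : Submodule A M)),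
    ∀ x : M ⧸ (I ^ i • ⊤ : Submodule A M), φ (quotProj I M h x) = quotProj I M h (ψ x)}

/-! For `n ≥ 1`, an automorphism of `M_n` lifts to an automorphism of `M_i` as soon as it lifts to
an endomorphism `ψ` of `M_i`: the kernel of `M_i → M_n` lies in `m M_i`, so `ψ` is surjective by
Nakayama, hence bijective since `M_i` is Noetherian. So it suffices that the images of `End(M_i)`
in `End(M_n)` stabilize. They form a decreasing chain of submodules of `End(M_n)`, and `End(M_n)`
is an Artinian `A`-module because `M_n` is a finitely generated module over the Artinian ring
`A/m^n`. -/

open IsLocalRing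

section
variable {R : Type*} [CommRing R] {M N : Type*} [AddCommGroup M] [Module R M]
  [AddCommGroup N] [Module R N]

theorem smul_top_le_ker_of_quotient (I : Ideal R) (f : N →ₗ[R] M ⧸ (I • ⊤ : Submodule R M)) :
    (I • ⊤ : Submodule R N) ≤ LinearMap.ker f := by
  intro x hx
  refine Submodule.smul_induction_on hx (fun a ha y _ => ?_) (fun y z hy hz => ?_)
  · rw [LinearMap.mem_ker, map_smul]
    exact Module.isTorsionBySet_quotient_ideal_smul M I (x := f y) (a := ⟨a, ha⟩)
  · exact add_mem hy hz

theorem IsLocalRing.surjective_of_surjective_comp [IsLocalRing R] [Module.Finite R M]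
    (f : M →ₗ[R] N) (hf : LinearMap.ker f ≤ maximalIdeal R • ⊤) {ψ : Module.End R M}
    (h : Function.Surjective (f ∘ₗ ψ)) : Function.Surjective ψ := by
  have hsup : LinearMap.range ψ ⊔ LinearMap.ker f = ⊤ := by
    rw [← Submodule.comap_map_eq, ← LinearMap.range_comp, LinearMap.range_eq_top.2 h,
      Submodule.comap_top]
  rw [← LinearMap.range_eq_top, eq_top_iff]
  refine Submodule.le_of_le_smul_of_le_jacobson_bot Module.Finite.fg_top
    (maximalIdeal_le_jacobson ⊥) ?_
  exact hsup.ge.trans (sup_le_sup_left hf _)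

theorem isArtinian_linearMap [Module.Finite R M] [IsArtinian R N] :
    IsArtinian R (M →ₗ[R] N) := by
  obtain ⟨s, hs⟩ := Module.Finite.fg_top (R := R) (M := M)
  refine isArtinian_of_injective (LinearMap.pi fun x : s => LinearMap.applyₗ (x : M)) ?_
  intro f g hfg
  exact LinearMap.ext_on hs fun x hx => congrFun hfg ⟨x, hx⟩

theorem Ideal.isArtinianRing_quotient_pow [IsNoetherianRing R] (I : Ideal R) [I.IsMaximal]
    (n : ℕ) : IsArtinianRing (R ⧸ I ^ n) := by
  have : Ring.KrullDimLE 0 (R ⧸ I ^ n) :=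
    Ideal.krullDimLE_zero_quotient_iff_forall_minimalPrimes_isMaximal.2 fun J ⟨⟨hJ, hIJ⟩, _⟩ => by
      rw [← ‹I.IsMaximal›.eq_of_le hJ.ne_top (hJ.le_of_pow_le hIJ)]
      infer_instance
  exact IsNoetherianRing.isArtinianRing_of_krullDimLE_zero

theorem isArtinian_quotient_pow_smul_top [IsNoetherianRing R] [Module.Finite R M] (I : Ideal R)
    [I.IsMaximal] (n : ℕ) : IsArtinian R (M ⧸ (I ^ n • ⊤ : Submodule R M)) := by
  have := Ideal.isArtinianRing_quotient_pow I n
  have : IsArtinian (R ⧸ I ^ n) (M ⧸ (I ^ n • ⊤ : Submodule R M)) := inferInstance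
  exact isArtinian_of_surjective_algebraMap (Ideal.Quotient.mk_surjective (I := I ^ n))

end

section QuotProj
variable {A : Type*} [CommRing A] (I : Ideal A) {M : Type*} [AddCommGroup M] [Module A M]

theorem quotProj_surjective {n i : ℕ} (h : n ≤ i) : Function.Surjective (quotProj I M h) := by
  rintro ⟨x⟩
  exact ⟨Submodule.Quotient.mk x, rfl⟩

theorem quotProj_comp_quotProj {n i j : ℕ} (hni : n ≤ i) (hij : i ≤ j) :
    quotProj I M hni ∘ₗ quotProj I M hij = quotProj I M (hni.trans hij) := by
  ext x
  rfl

theorem ker_quotProj {n i : ℕ} (h : n ≤ i) :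
    LinearMap.ker (quotProj I M h) =
      (I ^ n • ⊤ : Submodule A (M ⧸ (I ^ i • ⊤ : Submodule A M))) := by
  rw [quotProj, Submodule.ker_mapQ, Submodule.comap_id, Submodule.map_smul'', Submodule.map_top,
    Submodule.range_mkQ]

theorem exists_quotProj_comp_eq {i j : ℕ} (h : i ≤ j)
    (ψ : Module.End A (M ⧸ (I ^ j • ⊤ : Submodule A M))) :
    ∃ ψ' : Module.End A (M ⧸ (I ^ i • ⊤ : Submodule A M)),
      quotProj I M h ∘ₗ ψ = ψ' ∘ₗ quotProj I M h :=
  ⟨(I ^ i • ⊤ : Submodule A M).liftQ (quotProj I M h ∘ₗ ψ ∘ₗ Submodule.mkQ _)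
    (smul_top_le_ker_of_quotient _ _), by ext x; rfl⟩

end QuotProj

section EndImage
variable {A : Type*} [CommRing A] (I : Ideal A) (M : Type*) [AddCommGroup M] [Module A M]

def endImage {n i : ℕ} (h : n ≤ i) :
    Submodule A (Module.End A (M ⧸ (I ^ n • ⊤ : Submodule A M))) where
  carrier := {φ | ∃ ψ : Module.End A (M ⧸ (I ^ i • ⊤ : Submodule A M)),
    φ ∘ₗ quotProj I M h = quotProj I M h ∘ₗ ψ}
  zero_mem' := ⟨0, by simp⟩
  add_mem' := by
    rintro φ₁ φ₂ ⟨ψ₁, h₁⟩ ⟨ψ₂, h₂⟩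
    exact ⟨ψ₁ + ψ₂, by simp [LinearMap.add_comp, LinearMap.comp_add, h₁, h₂]⟩
  smul_mem' := by
    rintro a φ ⟨ψ, hψ⟩
    exact ⟨a • ψ, by simp [LinearMap.smul_comp, LinearMap.comp_smul, hψ]⟩

variable {I M}

theorem endImage_antitone {n i j : ℕ} (hni : n ≤ i) (hij : i ≤ j) :
    endImage I M (hni.trans hij) ≤ endImage I M hni := by
  rintro φ ⟨ψ, hψ⟩
  obtain ⟨ψ', hψ'⟩ := exists_quotProj_comp_eq I hij ψ
  refine ⟨ψ', (LinearMap.cancel_right (quotProj_surjective I hij)).1 ?_⟩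
  simp only [LinearMap.comp_assoc, ← hψ', quotProj_comp_quotProj, hψ]
  rw [← LinearMap.comp_assoc, quotProj_comp_quotProj]

theorem autImage_eq_setOf_mem_endImage [IsLocalRing A] [IsNoetherianRing A] [Module.Finite A M]
    {n i : ℕ} (hn : 1 ≤ n) (h : n ≤ i) :
    autImage (maximalIdeal A) M h = {φ | φ.toLinearMap ∈ endImage (maximalIdeal A) M h} := by
  ext φ
  constructor
  · rintro ⟨ψ, hψ⟩
    exact ⟨ψ, LinearMap.ext hψ⟩
  · rintro ⟨ψ, hψ⟩
    have hker : LinearMap.ker (quotProj (maximalIdeal A) M h) ≤ maximalIdeal A • ⊤ := by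
      rw [ker_quotProj]
      exact Submodule.smul_mono_left (Ideal.pow_le_self (by omega))
    have hsurj : Function.Surjective ψ :=
      surjective_of_surjective_comp _ hker (hψ ▸ φ.surjective.comp (quotProj_surjective _ h))
    have hinj : Function.Injective ψ := IsNoetherian.injective_of_surjective_endomorphism ψ hsurj
    exact ⟨.ofBijective ψ ⟨hinj, hsurj⟩, LinearMap.ext_iff.1 hψ⟩

end EndImage

theorem mittagLeffler_aut_quotient_general {A : Type*} [CommRing A] [IsNoetherianRing A]
    [IsLocalRing A] {M : Type*} [AddCommGroup M] [Module A M] [Module.Finite A M] :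
    ∀ n : ℕ, 1 ≤ n → ∃ N : ℕ, ∃ hN : n ≤ N, ∀ i j : ℕ, ∀ hi : N ≤ i, ∀ hj : N ≤ j,
      autImage (IsLocalRing.maximalIdeal A) M (le_trans hN hi) =
      autImage (IsLocalRing.maximalIdeal A) M (le_trans hN hj) := by
  intro n hn
  have := isArtinian_quotient_pow_smul_top (M := M) (maximalIdeal A) n
  have : IsArtinian A (Module.End A (M ⧸ (maximalIdeal A ^ n • ⊤ : Submodule A M))) :=
    isArtinian_linearMap
  obtain ⟨_, ⟨N, hN, rfl⟩, hmin⟩ := IsArtinian.set_has_minimal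
    {S | ∃ i, ∃ h : n ≤ i, S = endImage (maximalIdeal A) M h} ⟨_, n, le_rfl, rfl⟩
  have stable : ∀ i (hi : N ≤ i), endImage (maximalIdeal A) M (hN.trans hi) =
      endImage (maximalIdeal A) M hN := fun i hi =>
    (endImage_antitone hN hi).eq_of_not_lt (hmin _ ⟨i, _, rfl⟩)
  refine ⟨N, hN, fun i j hi hj => ?_⟩
  rw [autImage_eq_setOf_mem_endImage hn, autImage_eq_setOf_mem_endImage hn, stable i hi,
    stable j hj]

/-- For a complete Noetherian local ring `A` with maximal ideal `m` and a finitely generated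
`A`-module `M`, the inverse system `(Aut_A(M/m^n M))_{n ≥ 1}` satisfies the
Mittag-Leffler condition. -/
theorem mittagLeffler_aut_quotient {A : Type*} [CommRing A] [IsNoetherianRing A]
    [IsLocalRing A] [IsAdicComplete (IsLocalRing.maximalIdeal A) A]
    {M : Type*} [AddCommGroup M] [Module A M] [Module.Finite A M] :
    ∀ n : ℕ, 1 ≤ n → ∃ N : ℕ, ∃ hN : n ≤ N, ∀ i j : ℕ, ∀ hi : N ≤ i, ∀ hj : N ≤ j,
      autImage (IsLocalRing.maximalIdeal A) M (le_trans hN hi) =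
      autImage (IsLocalRing.maximalIdeal A) M (le_trans hN hj) :=
  mittagLeffler_aut_quotient_general
end

section
/- Let A be a complete Noetherian local commutative ring with maximal ideal m, and let M and N be finitely generated A-modules. Suppose that for every n ≥ 1 the quotient modules M/m^n M and N/m^n N are isomorphic as A-modules (no compatibility between the isomorphisms for different n is assumed). Then M and N are isomorphic as A-modules. -/
/-!
By Artin–Rees there is a `c` such that every linear map `M → N/mᶜ⁺¹N` agrees modulo `m` with a
genuine linear map `M → N`. Lifting the isomorphism `M/mᶜ⁺¹M ≅ N/mᶜ⁺¹N` in this way gives a map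
`M → N` that is surjective modulo `m`, hence surjective by Nakayama; symmetrically `N` surjects
onto `M`. The composite `M → N → M` is then a surjective endomorphism of a finitely generated
module, hence injective (Vasconcelos), so `M → N` is an isomorphism.
-/

open Submodule

section

variable {A : Type*} [CommRing A] {M : Type*} [AddCommGroup M] [Module A M]
  {N : Type*} [AddCommGroup N] [Module A N]

theorem LinearMap.mem_smul_top_of_forall_apply_mem {I : Ideal A} {ι : Type*} [Fintype ι]
    [DecidableEq ι] {φ : (ι → A) →ₗ[A] N} (hφ : ∀ x, φ x ∈ (I • ⊤ : Submodule A N)) :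
    φ ∈ (I • ⊤ : Submodule A ((ι → A) →ₗ[A] N)) := by
  have hsum : φ = ∑ j, (LinearMap.proj j).smulRight (φ (Pi.single j 1)) := by
    ext j
    simp [Pi.single_apply]
  rw [hsum]
  exact Submodule.sum_mem _ fun j _ => mem_comap.mp <|
    smul_top_le_comap_smul_top I (LinearMap.smulRightₗ (LinearMap.proj j : (ι → A) →ₗ[A] A))
      (hφ (Pi.single j 1))

theorem LinearMap.surjective_of_surjective_mkQ_comp [Module.Finite A N] {I : Ideal A}
    (hI : I ≤ Ideal.jacobson ⊥) {ψ : M →ₗ[A] N}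
    (hψ : Function.Surjective ((I • ⊤ : Submodule A N).mkQ ∘ₗ ψ)) : Function.Surjective ψ := by
  rw [← LinearMap.range_eq_top, LinearMap.range_comp, Submodule.map_mkQ_eq_top, sup_comm] at hψ
  rw [← LinearMap.range_eq_top, eq_top_iff]
  exact le_of_le_smul_of_le_jacobson_bot Module.Finite.fg_top hI hψ.ge

theorem LinearMap.exists_mkQ_comp_eq_factorPow_comp [IsNoetherianRing A] (I : Ideal A)
    (M N : Type*) [AddCommGroup M] [Module A M] [Module.Finite A M]
    [AddCommGroup N] [Module A N] [Module.Finite A N] :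
    ∃ c : ℕ, ∀ (n : ℕ) (φ : M →ₗ[A] N ⧸ (I ^ (n + c) • ⊤ : Submodule A N)),
      ∃ ψ : M →ₗ[A] N, (I ^ n • ⊤ : Submodule A N).mkQ ∘ₗ ψ =
        factorPow I N (Nat.le_add_right n c) ∘ₗ φ := by
  have := Module.finitePresentation_of_finite A M
  obtain ⟨r, s, π, g, hπ, hexact⟩ := Module.FinitePresentation.exists_fin' A M
  -- Maps `M → N` are the maps `Aʳ → N` killed by `res`; Artin–Rees is applied to its image.
  set res := LinearMap.lcomp A N g
  obtain ⟨c, hc⟩ := I.exists_pow_inf_eq_pow_smul (LinearMap.range res)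
  refine ⟨c, fun n φ => ?_⟩
  obtain ⟨χ, hχ⟩ := Module.projective_lifting_property (I ^ (n + c) • ⊤ : Submodule A N).mkQ
    (φ ∘ₗ π) (mkQ_surjective _)
  have hres : res χ ∈ I ^ (n + c) • ⊤ ⊓ LinearMap.range res := by
    refine ⟨mem_smul_top_of_forall_apply_mem fun x => ?_, LinearMap.mem_range_self _ _⟩
    have h := congr($hχ (g x))
    rwa [LinearMap.comp_apply, LinearMap.comp_apply, hexact.apply_apply_eq_zero, map_zero,
      mkQ_apply, Quotient.mk_eq_zero] at h
  rw [hc _ (Nat.le_add_left c n), Nat.add_sub_cancel] at hres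
  obtain ⟨δ, hδ, hδχ⟩ : res χ ∈ (I ^ n • ⊤ : Submodule A _).map res := by
    rw [map_smul'', Submodule.map_top]
    exact (smul_mono_right (I ^ n) inf_le_right : I ^ n • (_ ⊓ LinearMap.range res) ≤ _) hres
  obtain ⟨ψ, hψ⟩ := (exact_lcomp_of_exact_of_surjective N hexact hπ (χ - δ)).1 (by simp [hδχ, res])
  refine ⟨ψ, (LinearMap.cancel_right hπ).1 (LinearMap.ext fun x => ?_)⟩
  have hψx : ψ (π x) = χ x - δ x := congr($hψ x)
  have hδx : δ x ∈ (I ^ n • ⊤ : Submodule A N) :=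
    smul_top_le_comap_smul_top _ (LinearMap.applyₗ x) hδ
  have hχx : (I ^ (n + c) • ⊤ : Submodule A N).mkQ (χ x) = φ (π x) := congr($hχ x)
  simp only [LinearMap.comp_apply, hψx]
  rw [← hχx, factor_mk, mkQ_apply, mkQ_apply, Submodule.Quotient.eq, sub_sub_cancel_left]
  exact neg_mem hδx

theorem LinearMap.exists_surjective_of_exists_surjective_quotient_pow [IsNoetherianRing A]
    [Module.Finite A M] [Module.Finite A N] {I : Ideal A} (hI : I ≤ Ideal.jacobson ⊥)
    (h : ∀ n ≥ 1, ∃ φ : M →ₗ[A] N ⧸ (I ^ n • ⊤ : Submodule A N), Function.Surjective φ) :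
    ∃ ψ : M →ₗ[A] N, Function.Surjective ψ := by
  obtain ⟨c, hc⟩ := exists_mkQ_comp_eq_factorPow_comp I M N
  obtain ⟨φ, hφ⟩ := h (1 + c) (Nat.le_add_right 1 c)
  obtain ⟨ψ, hψ⟩ := hc 1 φ
  refine ⟨ψ, surjective_of_surjective_mkQ_comp ((pow_one I).le.trans hI) ?_⟩
  rw [hψ, LinearMap.coe_comp]
  exact (factor_surjective _).comp hφ

theorem LinearMap.nonempty_linearEquiv_of_surjective [Module.Finite A M] {f : M →ₗ[A] N}
    (hf : Function.Surjective f) {g : N →ₗ[A] M} (hg : Function.Surjective g) :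
    Nonempty (M ≃ₗ[A] N) :=
  ⟨.ofBijective f ⟨Function.Injective.of_comp (f := g)
    (OrzechProperty.injective_of_surjective_endomorphism (g ∘ₗ f) (hg.comp hf)), hf⟩⟩

end

theorem linearEquiv_of_linearEquiv_quotients_general {A : Type*} [CommRing A] [IsNoetherianRing A]
    [IsLocalRing A]
    {M : Type*} [AddCommGroup M] [Module A M] [Module.Finite A M]
    {N : Type*} [AddCommGroup N] [Module A N] [Module.Finite A N]
    (h : ∀ n : ℕ, 1 ≤ n → Nonempty
      ((M ⧸ ((IsLocalRing.maximalIdeal A) ^ n • ⊤ : Submodule A M)) ≃ₗ[A]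
       (N ⧸ ((IsLocalRing.maximalIdeal A) ^ n • ⊤ : Submodule A N)))) :
    Nonempty (M ≃ₗ[A] N) := by
  have hm := IsLocalRing.maximalIdeal_le_jacobson (R := A) ⊥
  obtain ⟨f, hf⟩ := LinearMap.exists_surjective_of_exists_surjective_quotient_pow hm fun n hn =>
    ⟨(h n hn).some.toLinearMap ∘ₗ mkQ _, (h n hn).some.surjective.comp (mkQ_surjective _)⟩
  obtain ⟨g, hg⟩ := LinearMap.exists_surjective_of_exists_surjective_quotient_pow hm fun n hn =>
    ⟨(h n hn).some.symm.toLinearMap ∘ₗ mkQ _, (h n hn).some.symm.surjective.comp (mkQ_surjective _)⟩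
  exact LinearMap.nonempty_linearEquiv_of_surjective hf hg

/-- Let `A` be a complete Noetherian local commutative ring with maximal ideal `m`, and let
`M`, `N` be finitely generated `A`-modules. If `M/m^n M ≅ N/m^n N` as `A`-modules for every
`n ≥ 1`, then `M ≅ N` as `A`-modules. -/
theorem linearEquiv_of_linearEquiv_quotients {A : Type*} [CommRing A] [IsNoetherianRing A]
    [IsLocalRing A] [IsAdicComplete (IsLocalRing.maximalIdeal A) A]
    {M : Type*} [AddCommGroup M] [Module A M] [Module.Finite A M]
    {N : Type*} [AddCommGroup N] [Module A N] [Module.Finite A N]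
    (h : ∀ n : ℕ, 1 ≤ n → Nonempty
      ((M ⧸ ((IsLocalRing.maximalIdeal A) ^ n • ⊤ : Submodule A M)) ≃ₗ[A]
       (N ⧸ ((IsLocalRing.maximalIdeal A) ^ n • ⊤ : Submodule A N)))) :
    Nonempty (M ≃ₗ[A] N) :=
  linearEquiv_of_linearEquiv_quotients_general h
end

section
/- Let E be a field and let R = E[[x_0, x_1, ..., x_k]] be the ring of formal power series in k+1 variables over E, with maximal ideal 𝔪 = (x_0, ..., x_k). For each l ≥ 0 put R_l = R/𝔪^l. Let a and b be positive integers with a ≤ b, let m ≥ 1, and let d_1, ..., d_m be integers with 0 < d_i < a for all i. Let U be a finitely generated R_b-module and let ξ : U → ⊕_{i=1}^m R_b/(x_0^{d_i}) be a surjective R_b-linear map (where (x_0^{d_i}) denotes the ideal of R_b generated by the image of x_0^{d_i}). Suppose ξ induces an isomorphism after base change to R_a, i.e., the induced map U/𝔪^a U → ⊕_{i=1}^m (R_b/(x_0^{d_i}))/𝔪^a·(R_b/(x_0^{d_i})) is bijective. Then ξ is an isomorphism. -/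
noncomputable section

/-- The formal power series ring `R = E[[x_0, …, x_k]]` in `k+1` variables over `E`. -/
abbrev PSRing (E : Type*) [Field E] (k : ℕ) : Type _ := MvPowerSeries (Fin (k + 1)) E

/-- The maximal ideal `𝔪 = (x_0, …, x_k)` of `E[[x_0, …, x_k]]`. -/
abbrev psMaxIdeal (E : Type*) [Field E] (k : ℕ) : Ideal (PSRing E k) :=
  Ideal.span (Set.range (MvPowerSeries.X : Fin (k + 1) → PSRing E k))

/-- The truncation `R_l = R/𝔪^l`. -/
abbrev PSQuot (E : Type*) [Field E] (k l : ℕ) : Type _ := PSRing E k ⧸ (psMaxIdeal E k) ^ l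

/-- The image of `𝔪` in `R_b`. -/
abbrev psMaxIdealQuot (E : Type*) [Field E] (k b : ℕ) : Ideal (PSQuot E k b) :=
  (psMaxIdeal E k).map (Ideal.Quotient.mk ((psMaxIdeal E k) ^ b))

/-
Since `𝔪` is nilpotent in `R_b`, Nakayama's lemma holds for arbitrary `R_b`-modules. Lifting the
standard generators of `⊕ R_b/(x_0^{d_i})` to `U` gives `π : R_b^m → U` with `ξ ∘ π` the canonical
projection; `π` is surjective because it is so modulo `𝔪^a`. An element of `ker ξ` lies in
`𝔪^a U = π(𝔪^a R_b^m)`, so it is `π c` with `c ∈ ⊕ (x_0^{d_i}) ∩ 𝔪^a R_b^m`. As `d_i < a`,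
`(x_0^{d_i}) ∩ 𝔪^a ⊆ 𝔪 (x_0^{d_i})`: if `x_0^d f ∈ 𝔪^a`, its coefficient of `x_0^d`, which is the
constant term of `f`, vanishes. Hence `ker ξ ⊆ 𝔪 ker ξ`, and `ker ξ = 0`.
-/

namespace MvPowerSeries

variable {σ R : Type*} [CommRing R]

theorem mem_span_X_image_of_coeff_eq_zero (S : Finset σ) (f : MvPowerSeries σ R)
    (hf : ∀ s : σ →₀ ℕ, (∀ i ∈ S, s i = 0) → coeff s f = 0) :
    f ∈ Ideal.span (X '' S) := by
  classical
  induction S using Finset.induction_on generalizing f with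
  | empty => simpa [MvPowerSeries.ext_iff] using hf
  | insert i S _ ih =>
    let g : MvPowerSeries σ R := fun s => if s i = 0 then 0 else coeff s f
    have hg_coeff (s : σ →₀ ℕ) : coeff s g = if s i = 0 then 0 else coeff s f := rfl
    have hg : X i ∣ g := X_dvd_iff.mpr fun s hs => by rw [hg_coeff, if_pos hs]
    have hfg : f - g ∈ Ideal.span (X '' S) := by
      refine ih _ fun s hs => ?_
      by_cases hsi : s i = 0
      · simpa [hg_coeff, hsi] using hf s (by simpa [hsi] using hs)
      · simp [hg_coeff, hsi]
    rw [← sub_add_cancel f g]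
    refine add_mem (Ideal.span_mono (by simp [Set.image_insert_eq]) hfg) ?_
    obtain ⟨h, hh⟩ := hg
    exact hh ▸ Ideal.mul_mem_right _ _ (Ideal.subset_span ⟨i, by simp, rfl⟩)

theorem span_range_X_le_ker_constantCoeff :
    Ideal.span (Set.range X) ≤ RingHom.ker (constantCoeff (σ := σ) (R := R)) :=
  Ideal.span_le.mpr <| Set.range_subset_iff.mpr fun i => by simp

theorem ker_constantCoeff [Finite σ] :
    RingHom.ker (constantCoeff (σ := σ) (R := R)) = Ideal.span (Set.range X) := by
  cases nonempty_fintype σ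
  refine le_antisymm (fun f hf => ?_) span_range_X_le_ker_constantCoeff
  rw [← Set.image_univ, ← Finset.coe_univ]
  refine mem_span_X_image_of_coeff_eq_zero _ f fun s hs => ?_
  obtain rfl : s = 0 := Finsupp.ext fun i => hs i (Finset.mem_univ i)
  simpa using hf

theorem nat_le_order_of_mem_pow {n : ℕ} {f : MvPowerSeries σ R}
    (hf : f ∈ Ideal.span (Set.range X) ^ n) : (n : ℕ∞) ≤ f.order := by
  induction n generalizing f with
  | zero => simp
  | succ n ih =>
    rw [pow_succ] at hf
    refine Submodule.mul_induction_on hf (fun x hx y hy => ?_) fun x y hx hy => ?_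
    · have hy1 : 1 ≤ y.order :=
        one_le_order_iff_constCoeff_eq_zero.mpr (span_range_X_le_ker_constantCoeff hy)
      push_cast
      exact (add_le_add (ih hx) hy1).trans le_order_mul
    · exact (le_min hx hy).trans min_order_le_add

theorem constantCoeff_eq_zero_of_X_pow_mul_mem_pow {s : σ} {d a : ℕ} (hda : d < a)
    {f : MvPowerSeries σ R} (hf : X s ^ d * f ∈ Ideal.span (Set.range X) ^ a) :
    constantCoeff f = 0 := by
  have hlt : ((Finsupp.single s d).degree : ℕ∞) < (X s ^ d * f).order := by
    rw [Finsupp.degree_single]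
    exact (Nat.cast_lt.mpr hda).trans_le (nat_le_order_of_mem_pow hf)
  simpa [X_pow_eq, coeff_monomial_mul] using coeff_of_lt_order hlt

local notation "𝔪" => Ideal.span (Set.range (X : σ → MvPowerSeries σ R))

theorem span_X_pow_inf_pow_le_mul [Finite σ] (s : σ) {d a b : ℕ} (hda : d < a) (hab : a ≤ b) :
    Ideal.span {Ideal.Quotient.mk (𝔪 ^ b) (X s ^ d)} ⊓ (𝔪).map (Ideal.Quotient.mk (𝔪 ^ b)) ^ a ≤
      (𝔪).map (Ideal.Quotient.mk (𝔪 ^ b)) * Ideal.span {Ideal.Quotient.mk (𝔪 ^ b) (X s ^ d)} := by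
  intro r hr
  obtain ⟨hrJ, hrI⟩ := Ideal.mem_inf.mp hr
  obtain ⟨t, rfl⟩ := Ideal.mem_span_singleton'.mp hrJ
  obtain ⟨f, rfl⟩ := Ideal.Quotient.mk_surjective t
  rw [← Ideal.map_pow, ← map_mul,
    Ideal.mem_map_iff_of_surjective _ Ideal.Quotient.mk_surjective] at hrI
  obtain ⟨g, hg, hgf⟩ := hrI
  have hXf : X s ^ d * f ∈ 𝔪 ^ a := by
    have : f * X s ^ d - g ∈ 𝔪 ^ b := Ideal.Quotient.eq.mp hgf.symm
    simpa [mul_comm] using add_mem (Ideal.pow_le_pow_right hab this) hg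
  have hf : f ∈ 𝔪 := ker_constantCoeff.le (constantCoeff_eq_zero_of_X_pow_mul_mem_pow hda hXf)
  exact Ideal.mul_mem_mul (Ideal.mem_map_of_mem _ hf) (Ideal.mem_span_singleton_self _)

end MvPowerSeries

namespace Submodule

variable {R : Type*} [CommRing R]

theorem le_of_le_sup_smul_of_isNilpotent {M : Type*} [AddCommGroup M] [Module R M] {I : Ideal R}
    (hI : IsNilpotent I) {N P : Submodule R M} (h : P ≤ N ⊔ I • P) : P ≤ N := by
  obtain ⟨n, hn⟩ := hI
  suffices ∀ j, P ≤ N ⊔ I ^ j • P by simpa [hn] using this n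
  intro j
  induction j with
  | zero => simp
  | succ j ih =>
    calc P ≤ N ⊔ I ^ j • P := ih
      _ ≤ N ⊔ I ^ j • (N ⊔ I • P) := sup_le_sup_left (smul_mono_right _ h) _
      _ = N ⊔ I ^ j • N ⊔ I ^ (j + 1) • P := by rw [smul_sup, pow_succ, mul_smul, sup_assoc]
      _ ≤ N ⊔ I ^ (j + 1) • P := sup_le_sup_right (sup_le le_rfl smul_le_right) _

theorem pi_inf_smul_top_le {ι : Type*} [Finite ι] {M : ι → Type*} [∀ i, AddCommGroup (M i)]
    [∀ i, Module R (M i)] {I A : Ideal R} (N : ∀ i, Submodule R (M i))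
    (h : ∀ i, N i ⊓ A • ⊤ ≤ I • N i) : pi Set.univ N ⊓ A • ⊤ ≤ I • pi Set.univ N := by
  classical
  cases nonempty_fintype ι
  rintro c ⟨hcN, hcA⟩
  rw [← Finset.univ_sum_single c]
  refine sum_mem fun i _ => ?_
  have hci : c i ∈ I • N i :=
    h i ⟨hcN i trivial, smul_top_le_comap_smul_top A (LinearMap.proj i) hcA⟩
  have := mem_map_of_mem (f := LinearMap.single R M i) hci
  rw [map_smul''] at this
  refine smul_mono_right I (map_le_iff_le_comap.mpr fun y hy j _ => ?_) this
  by_cases hj : j = i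
  · subst hj; simpa
  · simp [Pi.single_eq_of_ne hj]

end Submodule

namespace LinearMap

open Submodule

variable {R F U Q : Type*} [CommRing R] [AddCommGroup F] [AddCommGroup U] [AddCommGroup Q]
  [Module R F] [Module R U] [Module R Q]

theorem ker_le_smul_top_of_injective_mapQ {A : Ideal R} {ξ : U →ₗ[R] Q}
    (hinj : Function.Injective (mapQ (A • ⊤) (A • ⊤) ξ (smul_top_le_comap_smul_top A ξ))) :
    ker ξ ≤ A • ⊤ := fun x hx =>
  (Quotient.mk_eq_zero _).mp <| hinj <| by simp [mem_ker.mp hx]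

theorem injective_of_injective_mapQ [Module.Projective R F] {I A : Ideal R}
    (hI : IsNilpotent I) (hAI : A ≤ I) (p : F →ₗ[R] Q) (hp : Function.Surjective p)
    (hker : ker p ⊓ A • ⊤ ≤ I • ker p) (ξ : U →ₗ[R] Q) (hξ : Function.Surjective ξ)
    (hinj : Function.Injective (mapQ (A • ⊤) (A • ⊤) ξ (smul_top_le_comap_smul_top A ξ))) :
    Function.Injective ξ := by
  obtain ⟨π, hπ⟩ := Module.projective_lifting_property ξ p hξ
  have hξπ (c : F) : ξ (π c) = p c := congr($hπ c)
  have hK := ker_le_smul_top_of_injective_mapQ hinj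
  have hA : IsNilpotent A := by
    obtain ⟨n, hn⟩ := hI
    exact ⟨n, le_bot_iff.mp (hn ▸ Ideal.pow_right_mono hAI n : A ^ n ≤ 0)⟩
  have hπ_surj : range π = ⊤ := by
    refine top_le_iff.mp (le_of_le_sup_smul_of_isNilpotent hA fun x _ => ?_)
    obtain ⟨c, hc⟩ := hp (ξ x)
    have hx : x - π c ∈ ker ξ := by simp [hξπ, hc]
    simpa using add_mem_sup (mem_range_self π c) (hK hx)
  have hAU : A • (⊤ : Submodule R U) = map π (A • ⊤) := by
    rw [map_smul'', Submodule.map_top, hπ_surj]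
  have hKI : ker ξ ≤ I • ker ξ := by
    intro x hx
    obtain ⟨c, hcA, rfl⟩ := hAU ▸ hK hx
    have hcp : c ∈ ker p := by simpa [← hξπ] using hx
    have := mem_map_of_mem (f := π) (hker ⟨hcp, hcA⟩)
    rw [map_smul''] at this
    refine smul_mono_right I (map_le_iff_le_comap.mpr fun c hc => ?_) this
    simpa [hξπ] using hc
  exact ker_eq_bot.mp (le_bot_iff.mp (le_of_le_sup_smul_of_isNilpotent hI (by simpa using hKI)))

theorem injective_of_injective_mapQ_of_pi_quotient {ι : Type*} [Finite ι] {I A : Ideal R}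
    (hI : IsNilpotent I) (hAI : A ≤ I) (J : ι → Ideal R) (hJ : ∀ i, J i ⊓ A ≤ I * J i)
    (ξ : U →ₗ[R] Π i, R ⧸ J i) (hξ : Function.Surjective ξ)
    (hinj : Function.Injective (mapQ (A • ⊤) (A • ⊤) ξ (smul_top_le_comap_smul_top A ξ))) :
    Function.Injective ξ := by
  classical
  cases nonempty_fintype ι
  let p := (quotientPi fun i => (J i : Submodule R R)).toLinearMap ∘ₗ
    (Submodule.pi Set.univ J).mkQ
  have hker : ker p = Submodule.pi Set.univ J := by simp [p, LinearEquiv.ker_comp]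
  refine injective_of_injective_mapQ hI hAI p ((quotientPi _).surjective.comp (mkQ_surjective _))
    ?_ ξ hξ hinj
  rw [hker]
  refine pi_inf_smul_top_le _ fun i => ?_
  simpa [Ideal.smul_eq_mul, Ideal.mul_top] using hJ i

end LinearMap

set_option synthInstance.maxHeartbeats 1000000 in
/-- Let `R = E[[x_0, …, x_k]]` with maximal ideal `𝔪`, `R_l = R/𝔪^l`, let `0 < a ≤ b`,
`m ≥ 1`, and `0 < d_i < a` for all `i`.  If `ξ : U → ⊕_{i=1}^m R_b/(x_0^{d_i})` is a
surjective map of finitely generated `R_b`-modules inducing an isomorphism after base change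
to `R_a` (i.e. modulo `𝔪^a`), then `ξ` is an isomorphism. -/
theorem bijective_of_bijective_modulo {E : Type*} [Field E] (k a b m : ℕ)
    (ha : 0 < a) (hab : a ≤ b) (d : Fin m → ℕ)
    (hda : ∀ i, d i < a)
    (U : Type*) [AddCommGroup U] [Module (PSQuot E k b) U]
    (ξ : U →ₗ[PSQuot E k b]
      (Π i : Fin m, (PSQuot E k b) ⧸
        (Ideal.span {Ideal.Quotient.mk ((psMaxIdeal E k) ^ b)
          ((MvPowerSeries.X 0) ^ (d i))} : Ideal (PSQuot E k b))))
    (hsurj : Function.Surjective ξ)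
    (hbij : Function.Bijective
      (@Submodule.mapQ (PSQuot E k b) U _ _ _ ((psMaxIdealQuot E k b) ^ a • ⊤) (PSQuot E k b)
        (Π i : Fin m, (PSQuot E k b) ⧸
          (Ideal.span {Ideal.Quotient.mk ((psMaxIdeal E k) ^ b)
            ((MvPowerSeries.X 0) ^ (d i))} : Ideal (PSQuot E k b))) _ Pi.addCommGroup
        (@Pi.module (Fin m) (fun i : Fin m => (PSQuot E k b) ⧸
          (Ideal.span {Ideal.Quotient.mk ((psMaxIdeal E k) ^ b)
            ((MvPowerSeries.X 0) ^ (d i))} : Ideal (PSQuot E k b))) (PSQuot E k b) _ (fun _ => inferInstance) (fun _ => inferInstance))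
        (RingHom.id _) ((psMaxIdealQuot E k b) ^ a • ⊤) ξ
        (by
          letI := @Pi.module (Fin m) (fun i : Fin m => (PSQuot E k b) ⧸
              (Ideal.span {Ideal.Quotient.mk ((psMaxIdeal E k) ^ b)
                ((MvPowerSeries.X 0) ^ (d i))} : Ideal (PSQuot E k b))) (PSQuot E k b) _ (fun _ => inferInstance)
            (fun _ => inferInstance)
          rw [← Submodule.map_le_iff_le_comap, Submodule.map_smul'']
          exact Submodule.smul_mono le_rfl le_top))) :
    Function.Bijective ξ := by
  have hI : IsNilpotent (psMaxIdealQuot E k b) :=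
    ⟨b, by rw [← Ideal.map_pow, Ideal.map_quotient_self]; rfl⟩
  refine ⟨LinearMap.injective_of_injective_mapQ_of_pi_quotient hI (Ideal.pow_le_self ha.ne') _
    (fun i => MvPowerSeries.span_X_pow_inf_pow_le_mul 0 (hda i) hab) ξ hsurj hbij.1, hsurj⟩
end
end

section
/- Let G be a group and let G⁻ be a subset of G that is closed under the group multiplication (i.e., G⁻ is a subsemigroup of G). Suppose that for every g ∈ G there exist u_1, v_1, u_2, v_2 ∈ G⁻ such that g = u_1 v_1^{-1} and g = v_2^{-1} u_2. Then for every group H, every multiplicative map f : G⁻ → H (i.e., f(xy) = f(x)f(y) for all x, y ∈ G⁻) extends uniquely to a group homomorphism G → H. -/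
/-!
If every `g ∈ G` is a right fraction `a * b⁻¹` of elements of `T`, then `T` satisfies the right Ore
condition (`b⁻¹ * a = p * q⁻¹` gives `a * q = b * p`). Common right multiples show that
`φ a * (φ b)⁻¹` depends only on `a * b⁻¹`, so it defines a map on `G`, which is multiplicative
because a product of two fractions is again a fraction after passing to a common denominator.
-/

theorem MulHom.map_mul_eq_map_mul {G H : Type*} [Mul G] [Mul H] {T : Subsemigroup G}
    (φ : T →ₙ* H) {a b c d : T} (h : (a : G) * b = c * d) : φ a * φ b = φ c * φ d := by
  rw [← map_mul, ← map_mul]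
  exact congrArg φ (Subtype.ext h)

namespace Subsemigroup

variable {G H : Type*} [Group G] [Group H]

def RightFractionsCover (T : Subsemigroup G) : Prop :=
  ∀ g : G, ∃ a b : T, g = a * (b : G)⁻¹

namespace RightFractionsCover

variable {T : Subsemigroup G}

theorem exists_mul_eq_mul (hT : T.RightFractionsCover) (a b : T) :
    ∃ p q : T, (a : G) * q = b * p := by
  obtain ⟨p, q, hpq⟩ := hT ((b : G)⁻¹ * a)
  exact ⟨p, q, by rw [← inv_mul_eq_iff_eq_mul, ← mul_assoc, hpq, inv_mul_cancel_right]⟩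

theorem map_mul_inv_eq_of_mul_inv_eq (hT : T.RightFractionsCover) (φ : T →ₙ* H)
    {a b c d : T} (h : (a : G) * (b : G)⁻¹ = c * (d : G)⁻¹) :
    φ a * (φ b)⁻¹ = φ c * (φ d)⁻¹ := by
  obtain ⟨p, q, hac⟩ := hT.exists_mul_eq_mul a c
  have hbd : (b : G) * q = d * p := by
    have hcd : (c : G)⁻¹ * a = (d : G)⁻¹ * b := by
      rw [inv_mul_eq_iff_eq_mul, ← mul_assoc, ← h, inv_mul_cancel_right]
    rw [← inv_mul_eq_iff_eq_mul, ← mul_assoc, ← hcd, mul_assoc, hac, inv_mul_cancel_left]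
  calc φ a * (φ b)⁻¹ = φ a * φ q * (φ b * φ q)⁻¹ := by group
    _ = φ c * φ p * (φ d * φ p)⁻¹ := by
      rw [φ.map_mul_eq_map_mul hac, φ.map_mul_eq_map_mul hbd]
    _ = φ c * (φ d)⁻¹ := by group

noncomputable def extendFun (hT : T.RightFractionsCover) (φ : T →ₙ* H) (g : G) : H :=
  φ (hT g).choose * (φ (hT g).choose_spec.choose)⁻¹

theorem extendFun_mul_inv (hT : T.RightFractionsCover) (φ : T →ₙ* H) (a b : T) :
    hT.extendFun φ (a * (b : G)⁻¹) = φ a * (φ b)⁻¹ :=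
  hT.map_mul_inv_eq_of_mul_inv_eq φ (hT _).choose_spec.choose_spec.symm

theorem extendFun_mul (hT : T.RightFractionsCover) (φ : T →ₙ* H) (g₁ g₂ : G) :
    hT.extendFun φ (g₁ * g₂) = hT.extendFun φ g₁ * hT.extendFun φ g₂ := by
  obtain ⟨a₁, b₁, rfl⟩ := hT g₁
  obtain ⟨a₂, b₂, rfl⟩ := hT g₂
  obtain ⟨p, q, hpq⟩ := hT.exists_mul_eq_mul a₂ b₁
  have common_denominator :
      (a₁ : G) * (b₁ : G)⁻¹ * (a₂ * (b₂ : G)⁻¹) = ↑(a₁ * p) * (↑(b₂ * q) : G)⁻¹ := by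
    rw [MulMemClass.coe_mul, MulMemClass.coe_mul, ← mul_inv_eq_iff_eq_mul.mpr hpq]
    group
  rw [common_denominator, extendFun_mul_inv, extendFun_mul_inv, extendFun_mul_inv, map_mul,
    map_mul, eq_mul_inv_of_mul_eq (φ.map_mul_eq_map_mul hpq).symm]
  group

noncomputable def extend (hT : T.RightFractionsCover) (φ : T →ₙ* H) : G →* H :=
  MonoidHom.mk' (hT.extendFun φ) (hT.extendFun_mul φ)

theorem extend_coe (hT : T.RightFractionsCover) (φ : T →ₙ* H) (a : T) :
    hT.extend φ a = φ a := by
  obtain ⟨b, -, -⟩ := hT 1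
  have h := hT.extendFun_mul_inv φ (a * b) b
  rw [extend, MonoidHom.mk'_apply]
  rwa [MulMemClass.coe_mul, mul_inv_cancel_right, map_mul, mul_inv_cancel_right] at h

theorem monoidHom_ext (hT : T.RightFractionsCover) {F₁ F₂ : G →* H}
    (h : ∀ a : T, F₁ a = F₂ a) : F₁ = F₂ := by
  ext g
  obtain ⟨a, b, rfl⟩ := hT g
  simp only [map_mul, map_inv, h]

end RightFractionsCover

end Subsemigroup

/-- Let `G` be a group and `S = G⁻` a subset of `G` closed under multiplication, such that
every `g ∈ G` can be written both as `u₁ * v₁⁻¹` and as `v₂⁻¹ * u₂` with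
`u₁, v₁, u₂, v₂ ∈ S`.  Then every multiplicative map `f : S → H` into a group `H` extends
uniquely to a group homomorphism `G →* H`. -/
theorem extend_hom_of_subsemigroup {G H : Type*} [Group G] [Group H] (S : Set G)
    (hSmul : ∀ x ∈ S, ∀ y ∈ S, x * y ∈ S)
    (hSdense : ∀ g : G, ∃ u₁ ∈ S, ∃ v₁ ∈ S, ∃ u₂ ∈ S, ∃ v₂ ∈ S,
      g = u₁ * v₁⁻¹ ∧ g = v₂⁻¹ * u₂)
    (f : S → H)
    (hf : ∀ x y : S, f ⟨(x : G) * y, hSmul x x.2 y y.2⟩ = f x * f y) :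
    ∃! F : G →* H, ∀ x : S, F x = f x := by
  let T : Subsemigroup G := ⟨S, fun {x y} hx hy => hSmul x hx y hy⟩
  let φ : T →ₙ* H := ⟨f, hf⟩
  have hT : T.RightFractionsCover := fun g =>
    let ⟨u, hu, v, hv, _, _, _, _, h, _⟩ := hSdense g
    ⟨⟨u, hu⟩, ⟨v, hv⟩, h⟩
  exact ⟨hT.extend φ, hT.extend_coe φ, fun F hF =>
    hT.monoidHom_ext fun a => (hF a).trans (hT.extend_coe φ a).symm⟩
end
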